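/- arXiv:1911.08204 — 3 statements merged into one kernel-verified Lean document; each statement's English description precedes it below -/
import Mathlib

section
/- Let F : S^N → R be degenerate elliptic (monotone: X ≤ Y implies F(X) ≤ F(Y)) and positively homogeneous in the sense that there is h : (0,∞) → (0,∞) with F(tX) = h(t)F(X) for all t > 0. Let u : Ω → R be a lower semicontinuous viscosity supersolution of F(D²u) = 0 on an open set Ω ⊆ R^N with min_Ω u = 0, and let U = {x ∈ Ω : u(x) > 0}. Then for every φ ∈ C²(Ω) and every x̂ ∈ Ω \ U with φ ≤ φ(x̂) = 0 on Ω \ U, one has F(D²φ(x̂)) ≤ 0. -/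
open Classical in
/-- Eigenvalues of a real symmetric matrix arranged in nondecreasing order
(junk value `0` if the matrix is not symmetric). -/
noncomputable def sortedEig {N : ℕ} (A : Matrix (Fin N) (Fin N) ℝ) : Fin N → ℝ :=
  if h : A.IsHermitian then h.eigenvalues ∘ ⇑(Tuple.sort h.eigenvalues) else 0

/-- `P_k^-(A)`: the sum of the `k` smallest eigenvalues of `A`. -/
noncomputable def sumMinEig {N : ℕ} (k : ℕ) (A : Matrix (Fin N) (Fin N) ℝ) : ℝ :=
  ∑ i ∈ Finset.univ.filter (fun i : Fin N => (i : ℕ) < k), sortedEig A i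

/-- The Hessian matrix of `φ` at `x`. -/
noncomputable def hess {N : ℕ} (φ : EuclideanSpace ℝ (Fin N) → ℝ)
    (x : EuclideanSpace ℝ (Fin N)) : Matrix (Fin N) (Fin N) ℝ :=
  fun i j => iteratedFDeriv ℝ 2 φ x ![EuclideanSpace.single i 1, EuclideanSpace.single j 1]

/-! Suppose `F (D²φ(x̂)) > 0`. By continuity of `F` and of `D²φ`, the strict inequality survives
for `ψ = φ - δ ‖· - x̂‖²` on a small closed ball `B` around `x̂`. Where `u = 0` on `∂B` we have
`ψ ≤ -δ r² < 0`, so compactness and lower semicontinuity give `ε > 0` with `εψ < u` on `∂B`,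
while `εψ(x̂) = 0 = u(x̂)`. Hence `u - εψ` attains its minimum over `B` at an interior point, and
the supersolution property yields `0 ≥ F (ε D²ψ) = h ε · F (D²ψ) > 0`. -/

open Set Filter Metric Topology

theorem exists_pos_eventually_pos_sub_smul {X M : Type*} [TopologicalSpace X]
    [TopologicalSpace M] [AddCommGroup M] [Module ℝ M] [IsTopologicalAddGroup M]
    [ContinuousSMul ℝ M] {F : M → ℝ} {G : X → M} {c : X} (hF : Continuous F)
    (hG : ContinuousAt G c) (hc : 0 < F (G c)) (a : M) :
    ∃ δ : ℝ, 0 < δ ∧ ∀ᶠ x in 𝓝 c, 0 < F (G x - δ • a) := by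
  have hcont : ContinuousAt (fun p : ℝ × X => F (G p.2 - p.1 • a)) (0, c) :=
    hF.continuousAt.comp ((hG.comp continuousAt_snd).sub (continuousAt_fst.smul continuousAt_const))
  have hev : ∀ᶠ p in 𝓝 (0 : ℝ) ×ˢ 𝓝 c, 0 < F (G p.2 - p.1 • a) := by
    rw [← nhds_prod_eq]
    exact hcont.eventually (lt_mem_nhds (by simpa using hc))
  obtain ⟨δ, hδF, hδ⟩ :=
    ((hev.curry.filter_mono nhdsWithin_le_nhds).and
      (self_mem_nhdsWithin : Ioi (0 : ℝ) ∈ 𝓝[>] 0)).exists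
  exact ⟨δ, hδ, hδF⟩

theorem IsCompact.exists_pos_mul_lt {X : Type*} [TopologicalSpace X] {K : Set X}
    (hK : IsCompact K) {u ψ : X → ℝ} (hu : LowerSemicontinuousOn u K) (hψ : ContinuousOn ψ K)
    (hu₀ : ∀ x ∈ K, 0 ≤ u x) (hψu : ∀ x ∈ K, 0 ≤ ψ x → 0 < u x) :
    ∃ ε > 0, ∀ x ∈ K, ε * ψ x < u x := by
  obtain ⟨m, hm, hmu⟩ : ∃ m > 0, ∀ x ∈ K ∩ ψ ⁻¹' Ici 0, m ≤ u x := by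
    rcases (K ∩ ψ ⁻¹' Ici 0).eq_empty_or_nonempty with hempty | hne
    · exact ⟨1, one_pos, by simp [hempty]⟩
    obtain ⟨z, hz, hzmin⟩ := (hu.mono inter_subset_left).exists_isMinOn hne
      (hψ.upperSemicontinuousOn.isCompact_inter_preimage_Ici hK 0)
    exact ⟨u z, hψu z hz.1 hz.2, fun x hx => hzmin hx⟩
  obtain ⟨C, hC⟩ := hK.bddAbove_image hψ
  refine ⟨m / (max C 0 + 1), by positivity, fun x hx => ?_⟩
  rcases le_or_gt 0 (ψ x) with hψx | hψx
  · calc m / (max C 0 + 1) * ψ x < m := by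
          rw [div_mul_eq_mul_div, div_lt_iff₀ (by positivity)]
          have := hC (mem_image_of_mem ψ hx)
          nlinarith [le_max_left C 0]
      _ ≤ u x := hmu x ⟨hx, hψx⟩
  · exact (mul_neg_of_pos_of_neg (by positivity) hψx).trans_le (hu₀ x hx)

theorem exists_isLocalMin_sub_of_lt_on_sphere {E : Type*} [MetricSpace E] [ProperSpace E]
    {u Φ : E → ℝ} {c : E} {r : ℝ} (hr : 0 ≤ r) (hu : LowerSemicontinuousOn u (closedBall c r))
    (hΦ : ContinuousOn Φ (closedBall c r)) (hsphere : ∀ x ∈ sphere c r, Φ x < u x)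
    (hc : u c ≤ Φ c) :
    ∃ x ∈ ball c r, IsLocalMin (fun y => u y - Φ y) x := by
  have hlsc : LowerSemicontinuousOn (fun y => u y - Φ y) (closedBall c r) := by
    simp_rw [sub_eq_add_neg]
    exact hu.add (hΦ.neg.lowerSemicontinuousOn : LowerSemicontinuousOn (fun y => -Φ y) _)
  obtain ⟨x, hx, hmin⟩ :=
    hlsc.exists_isMinOn ⟨c, mem_closedBall_self hr⟩ (isCompact_closedBall c r)
  have hxc : u x - Φ x ≤ 0 := (hmin (mem_closedBall_self hr)).trans (sub_nonpos.2 hc)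
  have hx_ball : x ∈ ball c r := by
    rcases (mem_closedBall.1 hx).lt_or_eq with hlt | heq
    · exact hlt
    · linarith [hsphere x heq]
  exact ⟨x, hx_ball, hmin.isLocalMin (closedBall_mem_nhds_of_mem hx_ball)⟩

section Hessian

variable {N : ℕ} {f g : EuclideanSpace ℝ (Fin N) → ℝ} {x : EuclideanSpace ℝ (Fin N)}

theorem hess_sub (hf : ContDiffAt ℝ 2 f x) (hg : ContDiffAt ℝ 2 g x) :
    hess (f - g) x = hess f x - hess g x := by
  ext i j
  simp [hess, iteratedFDeriv_sub_apply hf hg]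

theorem hess_const_smul (a : ℝ) (hf : ContDiffAt ℝ 2 f x) :
    hess (a • f) x = a • hess f x := by
  ext i j
  simp [hess, iteratedFDeriv_const_smul_apply hf]

theorem hess_norm_sub_sq (c : EuclideanSpace ℝ (Fin N)) :
    hess (fun y => ‖y - c‖ ^ 2) x = (2 : ℝ) • 1 := by
  have hD : fderiv ℝ (fun y : EuclideanSpace ℝ (Fin N) => ‖y - c‖ ^ 2)
      = fun y => 2 • innerSL ℝ (y - c) := by
    funext y
    simpa using (((hasFDerivAt_id y).sub_const c).norm_sq).fderiv
  have hD2 : HasFDerivAt (fun y : EuclideanSpace ℝ (Fin N) => 2 • innerSL ℝ (y - c))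
      (2 • innerSL ℝ) x :=
    ((2 • innerSL ℝ : EuclideanSpace ℝ (Fin N) →L[ℝ] _).hasFDerivAt).comp x
      ((hasFDerivAt_id x).sub_const c)
  ext i j
  rw [hess, iteratedFDeriv_two_apply, hD, hD2.fderiv, smul_apply,
    smul_apply, innerSL_apply_apply]
  simp [EuclideanSpace.inner_single_left, Matrix.one_apply]

theorem hess_sub_smul_norm_sub_sq (hf : ContDiffAt ℝ 2 f x) (δ : ℝ)
    (c : EuclideanSpace ℝ (Fin N)) :
    hess (f - δ • fun y => ‖y - c‖ ^ 2) x = hess f x - δ • (2 : ℝ) • 1 := by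
  have hq : ContDiffAt ℝ 2 (fun y : EuclideanSpace ℝ (Fin N) => ‖y - c‖ ^ 2) x :=
    ((contDiff_norm_sq ℝ).comp (contDiff_id.sub contDiff_const)).contDiffAt
  rw [hess_sub (g := δ • _) hf (hq.const_smul δ), hess_const_smul δ hq, hess_norm_sub_sq]

theorem hess_continuousOn {Ω : Set (EuclideanSpace ℝ (Fin N))} (hΩ : IsOpen Ω)
    (hf : ContDiffOn ℝ 2 f Ω) : ContinuousOn (hess f) Ω := by
  have h : ContinuousOn (iteratedFDeriv ℝ 2 f) Ω :=
    (hf.continuousOn_iteratedFDerivWithin le_rfl hΩ.uniqueDiffOn).congr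
      fun x hx => (iteratedFDerivWithin_of_isOpen 2 hΩ hx).symm
  exact continuousOn_pi.2 fun i => continuousOn_pi.2 fun j =>
    (continuous_eval_const _).comp_continuousOn h

end Hessian

def IsViscositySupersolution {N : ℕ} (F : Matrix (Fin N) (Fin N) ℝ → ℝ)
    (Ω : Set (EuclideanSpace ℝ (Fin N))) (u : EuclideanSpace ℝ (Fin N) → ℝ) : Prop :=
  ∀ φ : EuclideanSpace ℝ (Fin N) → ℝ, ContDiffOn ℝ 2 φ Ω → ∀ x ∈ Ω,
    IsLocalMinOn (fun y => u y - φ y) Ω x → F (hess φ x) ≤ 0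

theorem IsViscositySupersolution.exists_mem_ball_hess_nonpos {N : ℕ}
    {F : Matrix (Fin N) (Fin N) ℝ → ℝ} {Ω : Set (EuclideanSpace ℝ (Fin N))}
    {u Φ : EuclideanSpace ℝ (Fin N) → ℝ} {c : EuclideanSpace ℝ (Fin N)} {r : ℝ}
    (hsuper : IsViscositySupersolution F Ω u) (hu : LowerSemicontinuousOn u Ω)
    (hΦ : ContDiffOn ℝ 2 Φ Ω) (hr : 0 ≤ r) (hrΩ : closedBall c r ⊆ Ω)
    (hsphere : ∀ x ∈ sphere c r, Φ x < u x) (hc : u c ≤ Φ c) :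
    ∃ x ∈ ball c r, F (hess Φ x) ≤ 0 := by
  obtain ⟨x, hx, hmin⟩ := exists_isLocalMin_sub_of_lt_on_sphere hr (hu.mono hrΩ)
    (hΦ.continuousOn.mono hrΩ) hsphere hc
  exact ⟨x, hx, hsuper Φ hΦ x (hrΩ (ball_subset_closedBall hx)) (hmin.on Ω)⟩

theorem IsViscositySupersolution.exists_smul_hess_sub_nonpos {N : ℕ}
    {F : Matrix (Fin N) (Fin N) ℝ → ℝ} {Ω : Set (EuclideanSpace ℝ (Fin N))}
    {u φ : EuclideanSpace ℝ (Fin N) → ℝ} {c : EuclideanSpace ℝ (Fin N)} {r δ : ℝ}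
    (hsuper : IsViscositySupersolution F Ω u) (hΩ : IsOpen Ω) (hu : LowerSemicontinuousOn u Ω)
    (hu₀ : ∀ x ∈ Ω, 0 ≤ u x) (hφ : ContDiffOn ℝ 2 φ Ω) (hr : 0 < r) (hδ : 0 < δ)
    (hrΩ : closedBall c r ⊆ Ω) (hφ_sphere : ∀ x ∈ sphere c r, u x ≤ 0 → φ x ≤ 0)
    (huc : u c ≤ 0) (hφc : φ c = 0) :
    ∃ ε : ℝ, 0 < ε ∧ ∃ x ∈ ball c r, F (ε • (hess φ x - δ • (2 : ℝ) • 1)) ≤ 0 := by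
  set ψ := φ - δ • fun y => ‖y - c‖ ^ 2 with hψ_def
  have hψ : ContDiffOn ℝ 2 ψ Ω := hφ.sub (((contDiff_norm_sq ℝ).comp
    (contDiff_id.sub contDiff_const)).contDiffOn.const_smul δ)
  have hsphereΩ : sphere c r ⊆ Ω := sphere_subset_closedBall.trans hrΩ
  have hψu : ∀ x ∈ sphere c r, 0 ≤ ψ x → 0 < u x := by
    intro x hx hψx
    by_contra! hux
    have hφx := hφ_sphere x hx hux
    simp only [ψ, Pi.sub_apply, Pi.smul_apply, smul_eq_mul, ← dist_eq_norm, mem_sphere.1 hx]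
      at hψx
    nlinarith [mul_pos hδ (pow_pos hr 2)]
  obtain ⟨ε, hε, hεψ⟩ := (isCompact_sphere c r).exists_pos_mul_lt (hu.mono hsphereΩ)
    (hψ.continuousOn.mono hsphereΩ) (fun x hx => hu₀ x (hsphereΩ hx)) hψu
  obtain ⟨x, hx, hFx⟩ := hsuper.exists_mem_ball_hess_nonpos (Φ := ε • ψ) hu
    (hψ.const_smul ε) hr.le hrΩ hεψ (by simpa [ψ, hφc] using huc)
  have hxΩ : x ∈ Ω := hrΩ (ball_subset_closedBall hx)
  rw [hess_const_smul ε (hψ.contDiffAt (hΩ.mem_nhds hxΩ)), hψ_def,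
    hess_sub_smul_norm_sub_sq (hφ.contDiffAt (hΩ.mem_nhds hxΩ))] at hFx
  exact ⟨ε, hε, x, hx, hFx⟩

theorem stmt6_general {N : ℕ} (F : Matrix (Fin N) (Fin N) ℝ → ℝ)
    (hFc : Continuous F)
    (h : ℝ → ℝ) (hpos : ∀ t, 0 < t → 0 < h t)
    (hhom : ∀ t, 0 < t → ∀ X, F (t • X) = h t * F X)
    (Ω : Set (EuclideanSpace ℝ (Fin N))) (hΩ : IsOpen Ω)
    (u : EuclideanSpace ℝ (Fin N) → ℝ) (hu : LowerSemicontinuousOn u Ω)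
    (hsuper : ∀ φ : EuclideanSpace ℝ (Fin N) → ℝ, ContDiffOn ℝ 2 φ Ω → ∀ x ∈ Ω,
      IsLocalMinOn (fun y => u y - φ y) Ω x → F (hess φ x) ≤ 0)
    (hnn : ∀ x ∈ Ω, 0 ≤ u x)
    (U : Set (EuclideanSpace ℝ (Fin N))) (hU : U = {x ∈ Ω | 0 < u x})
    (φ : EuclideanSpace ℝ (Fin N) → ℝ) (hφ : ContDiffOn ℝ 2 φ Ω)
    (xh : EuclideanSpace ℝ (Fin N)) (hxh : xh ∈ Ω \ U)
    (hφle : ∀ x ∈ Ω \ U, φ x ≤ 0) (hφxh : φ xh = 0) :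
    F (hess φ xh) ≤ 0 := by
  by_contra! hcon
  subst hU
  obtain ⟨hxhΩ, hxhU⟩ := hxh
  obtain ⟨δ, hδ, hδF⟩ := exists_pos_eventually_pos_sub_smul hFc
    ((hess_continuousOn hΩ hφ).continuousAt (hΩ.mem_nhds hxhΩ)) hcon ((2 : ℝ) • 1)
  obtain ⟨r, hr, hrΩ⟩ := nhds_basis_closedBall.mem_iff.1 (inter_mem (hΩ.mem_nhds hxhΩ) hδF)
  have hBΩ : closedBall xh r ⊆ Ω := fun x hx => (hrΩ hx).1
  obtain ⟨ε, hε, x, hx, hFx⟩ := IsViscositySupersolution.exists_smul_hess_sub_nonpos hsuper hΩ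
    hu hnn hφ hr hδ hBΩ
    (fun x hx hux => hφle x ⟨hBΩ (sphere_subset_closedBall hx), fun h => hux.not_gt h.2⟩)
    (not_lt.1 fun h => hxhU ⟨hxhΩ, h⟩) hφxh
  rw [hhom ε hε] at hFx
  exact (mul_pos (hpos ε hε) (hrΩ (ball_subset_closedBall hx)).2).not_ge hFx

/-- The positivity set of a nonnegative supersolution of `F(D²u) = 0`
satisfies the geometric condition (G_{F,Ω,U}). -/
theorem stmt6 {N : ℕ} (F : Matrix (Fin N) (Fin N) ℝ → ℝ)
    (hFc : Continuous F)
    (hell : ∀ X Y : Matrix (Fin N) (Fin N) ℝ,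
      X.IsHermitian → Y.IsHermitian → (Y - X).PosSemidef → F X ≤ F Y)
    (h : ℝ → ℝ) (hpos : ∀ t, 0 < t → 0 < h t)
    (hhom : ∀ t, 0 < t → ∀ X, F (t • X) = h t * F X)
    (Ω : Set (EuclideanSpace ℝ (Fin N))) (hΩ : IsOpen Ω)
    (u : EuclideanSpace ℝ (Fin N) → ℝ) (hu : LowerSemicontinuousOn u Ω)
    (hsuper : ∀ φ : EuclideanSpace ℝ (Fin N) → ℝ, ContDiffOn ℝ 2 φ Ω → ∀ x ∈ Ω,
      IsLocalMinOn (fun y => u y - φ y) Ω x → F (hess φ x) ≤ 0)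
    (hnn : ∀ x ∈ Ω, 0 ≤ u x) (hmin : ∃ x ∈ Ω, u x = 0)
    (U : Set (EuclideanSpace ℝ (Fin N))) (hU : U = {x ∈ Ω | 0 < u x})
    (φ : EuclideanSpace ℝ (Fin N) → ℝ) (hφ : ContDiffOn ℝ 2 φ Ω)
    (xh : EuclideanSpace ℝ (Fin N)) (hxh : xh ∈ Ω \ U)
    (hφle : ∀ x ∈ Ω \ U, φ x ≤ 0) (hφxh : φ xh = 0) :
    F (hess φ xh) ≤ 0 :=
  stmt6_general F hFc h hpos hhom Ω hΩ u hu hsuper hnn U hU φ hφ xh hxh hφle hφxh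
end

section
/- Let U be an open subset of Ω ⊆ R^N whose relative boundary Ω ∩ ∂U is a C² hypersurface, and suppose at each boundary point the principal curvatures κ_1 ≤ ... ≤ κ_{N−1} (with the convention that curvatures of a ball are positive as seen from inside U) satisfy κ_{N−k} + ... + κ_{N−1} ≥ 0. Then condition (G_{P_k^-,Ω,U}) holds: for every φ ∈ C²(Ω) and x̂ ∈ Ω \ U with φ ≤ φ(x̂) = 0 on Ω \ U, P_k^-(D²φ(x̂)) ≤ 0. -/
open Finset Filter Topology Metric RealInnerProductSpace EuclideanSpace

theorem sum_filter_lt_le_sum_mul_of_monotone {N k : ℕ} (hkN : k < N) {μ d : Fin N → ℝ}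
    (hμ : Monotone μ) (hd0 : ∀ i, 0 ≤ d i) (hd1 : ∀ i, d i ≤ 1) (hd : ∑ i, d i = k) :
    ∑ i ∈ univ.filter (fun i : Fin N => (i : ℕ) < k), μ i ≤ ∑ i, d i * μ i := by
  set t := μ ⟨k, hkN⟩
  -- each term of `∑ (d i - [i < k]) * (μ i - t)` is nonnegative, and the `t`-part sums to `0`
  have hterm : ∀ i : Fin N, t * (d i - if (i : ℕ) < k then 1 else 0) ≤
      d i * μ i - if (i : ℕ) < k then μ i else 0 := by
    intro i
    split_ifs with hi
    · nlinarith [hd1 i, hμ (show i ≤ ⟨k, hkN⟩ from Fin.mk_le_mk.mpr hi.le)]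
    · nlinarith [hd0 i, hμ (show ⟨k, hkN⟩ ≤ i from Fin.mk_le_mk.mpr (not_lt.mp hi))]
  have hcard : ∑ i : Fin N, (if (i : ℕ) < k then (1 : ℝ) else 0) = k := by
    simp [sum_boole, Fin.card_filter_val_lt, hkN.le]
  have := sum_le_sum fun i (_ : i ∈ univ) => hterm i
  rw [← mul_sum, sum_sub_distrib, sum_sub_distrib, hd, hcard, ← sum_filter] at this
  linarith

namespace Matrix.IsHermitian

variable {N k : ℕ} {A : Matrix (Fin N) (Fin N) ℝ} (hA : A.IsHermitian)
include hA

theorem inner_toEuclideanLin_self (x : EuclideanSpace ℝ (Fin N)) :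
    ⟪x, toEuclideanLin A x⟫ = ∑ i, hA.eigenvalues i * ⟪hA.eigenvectorBasis i, x⟫ ^ 2 := by
  have hT := Matrix.isSymmetric_toEuclideanLin_iff.mpr hA
  rw [← hA.eigenvectorBasis.sum_inner_mul_inner]
  refine sum_congr rfl fun i _ => ?_
  have hb : toEuclideanLin A (hA.eigenvectorBasis i) =
      hA.eigenvalues i • hA.eigenvectorBasis i := by
    ext j
    simpa using congrFun (hA.mulVec_eigenvectorBasis i) j
  rw [← hT, hb, real_inner_smul_left, real_inner_comm x]
  ring

theorem sumMinEig_eq :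
    sumMinEig k A = ∑ i ∈ univ.filter (fun i : Fin N => (i : ℕ) < k),
      (hA.eigenvalues ∘ Tuple.sort hA.eigenvalues) i := by
  rw [sumMinEig, sortedEig, dif_pos hA]

theorem sumMinEig_le_sum_inner (hkN : k < N) {ι : Type*} [Fintype ι]
    (hι : Fintype.card ι = k) {v : ι → EuclideanSpace ℝ (Fin N)} (hv : Orthonormal ℝ v) :
    sumMinEig k A ≤ ∑ j, ⟪v j, toEuclideanLin A (v j)⟫ := by
  set b := hA.eigenvectorBasis
  set σ := Tuple.sort hA.eigenvalues
  -- `d i` is the squared norm of the projection of `b i` onto the span of `v`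
  set d : Fin N → ℝ := fun i => ∑ j, ⟪b i, v j⟫ ^ 2
  have hd0 : ∀ i, 0 ≤ d i := fun i => sum_nonneg fun j _ => sq_nonneg _
  have hd1 : ∀ i, d i ≤ 1 := fun i => by
    simpa [d, real_inner_comm, b.orthonormal.1 i] using hv.sum_inner_products_le (b i) (s := univ)
  have hd : ∑ i, d i = k := by
    simp only [d]
    rw [sum_comm]
    simp [b.sum_sq_inner_right, hv.1, hι]
  calc sumMinEig k A
      ≤ ∑ i, d (σ i) * (hA.eigenvalues ∘ σ) i := by
        rw [hA.sumMinEig_eq]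
        exact sum_filter_lt_le_sum_mul_of_monotone hkN (Tuple.monotone_sort _)
          (fun _ => hd0 _) (fun _ => hd1 _) (by rw [Equiv.sum_comp σ d, hd])
    _ = ∑ j, ⟪v j, toEuclideanLin A (v j)⟫ := by
        change ∑ i, d (σ i) * hA.eigenvalues (σ i) = _
        rw [Equiv.sum_comp σ (fun i => d i * hA.eigenvalues i)]
        simp only [hA.inner_toEuclideanLin_self, d, sum_mul]
        rw [sum_comm]
        simp only [mul_comm, b]

end Matrix.IsHermitian

section SecondOrder

variable {E F : Type*} [NormedAddCommGroup E] [NormedSpace ℝ E] [NormedAddCommGroup F]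
  [NormedSpace ℝ F]

theorem IsLocalMax.deriv_deriv_nonpos {ψ : ℝ → ℝ} {a : ℝ} (h : IsLocalMax ψ a)
    (hc : ContinuousAt ψ a) : deriv (deriv ψ) a ≤ 0 := by
  by_contra! hpos
  -- otherwise `a` is also a local minimum, so `ψ` is locally constant
  have hmin := isLocalMin_of_deriv_deriv_pos hpos h.deriv_eq_zero hc
  have hconst : ψ =ᶠ[𝓝 a] fun _ => ψ a := by
    filter_upwards [h, hmin] with t h₁ h₂ using le_antisymm h₁ h₂
  simp [hconst.deriv.deriv_eq] at hpos

theorem deriv_deriv_comp_of_contDiffAt {φ : E → F} {c : ℝ → E} {t : ℝ}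
    (hφ : ContDiffAt ℝ 2 φ (c t)) (hc : ContDiffAt ℝ 2 c t) :
    deriv (deriv (φ ∘ c)) t = fderiv ℝ (fderiv ℝ φ) (c t) (deriv c t) (deriv c t) +
      fderiv ℝ φ (c t) (deriv (deriv c) t) := by
  have hchain : deriv (φ ∘ c) =ᶠ[𝓝 t] fun s => fderiv ℝ φ (c s) (deriv c s) := by
    filter_upwards [hc.continuousAt.eventually (hφ.eventually (by simp)), hc.eventually (by simp)]
      with s hφs hcs
    exact ((hφs.differentiableAt two_ne_zero).hasFDerivAt.comp_hasDerivAt s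
      (hcs.differentiableAt two_ne_zero).hasDerivAt).deriv
  have hDφ : HasDerivAt (fun s => fderiv ℝ φ (c s))
      (fderiv ℝ (fderiv ℝ φ) (c t) (deriv c t)) t :=
    ((hφ.fderiv_right (m := 1) le_rfl).differentiableAt one_ne_zero).hasFDerivAt.comp_hasDerivAt t
      (hc.differentiableAt two_ne_zero).hasDerivAt
  have hc' : HasDerivAt (deriv c) (deriv (deriv c) t) t :=
    ((hc.derivWithin (m := 1) le_rfl).differentiableAt one_ne_zero).hasDerivAt
  rw [hchain.deriv_eq, (hDφ.clm_apply hc').deriv]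

theorem IsLocalMax.fderiv_fderiv_add_fderiv_nonpos {φ : E → ℝ} {c : ℝ → E}
    (h : IsLocalMax (φ ∘ c) 0) (hφ : ContDiffAt ℝ 2 φ (c 0)) (hc : ContDiffAt ℝ 2 c 0) :
    fderiv ℝ (fderiv ℝ φ) (c 0) (deriv c 0) (deriv c 0) +
      fderiv ℝ φ (c 0) (deriv (deriv c) 0) ≤ 0 := by
  rw [← deriv_deriv_comp_of_contDiffAt hφ hc]
  exact h.deriv_deriv_nonpos (hφ.continuousAt.comp hc.continuousAt)

theorem IsLocalMax.fderiv_fderiv_apply_self_nonpos {φ : E → ℝ} {x : E} (h : IsLocalMax φ x)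
    (hφ : ContDiffAt ℝ 2 φ x) (v : E) : fderiv ℝ (fderiv ℝ φ) x v v ≤ 0 := by
  set c : ℝ → E := fun t => x + t • v
  have hc0 : c 0 = x := by simp [c]
  have hdc : deriv c = fun _ => v := funext fun t =>
    (by simpa [c] using ((hasDerivAt_id t).smul_const v).const_add x : HasDerivAt c v t).deriv
  have := IsLocalMax.fderiv_fderiv_add_fderiv_nonpos
    ((hc0 ▸ h : IsLocalMax φ (c 0)).comp_continuous (by fun_prop)) (hc0 ▸ hφ) (by fun_prop)
  simpa [hdc, hc0] using this

end SecondOrder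

section Hessian

variable {N : ℕ} {φ : EuclideanSpace ℝ (Fin N) → ℝ} {x : EuclideanSpace ℝ (Fin N)}

theorem hess_apply (i j : Fin N) :
    hess φ x i j =
      fderiv ℝ (fderiv ℝ φ) x (single i 1) (single j 1) := by
  simp [hess, iteratedFDeriv_two_apply]

theorem hess_eq_toMatrix₂ :
    hess φ x = LinearMap.toMatrix₂ (EuclideanSpace.basisFun (Fin N) ℝ).toBasis
      (EuclideanSpace.basisFun (Fin N) ℝ).toBasis
      (fderiv ℝ (fderiv ℝ φ) x).toLinearMap₁₂ := by
  ext i j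
  simp [hess_apply]

theorem inner_toEuclideanLin_hess (v : EuclideanSpace ℝ (Fin N)) :
    ⟪v, Matrix.toEuclideanLin (hess φ x) v⟫ = fderiv ℝ (fderiv ℝ φ) x v v := by
  rw [← ContinuousLinearMap.toLinearMap₁₂_apply_apply_apply,
    apply_eq_dotProduct_toMatrix₂_mulVec (EuclideanSpace.basisFun (Fin N) ℝ).toBasis
      (EuclideanSpace.basisFun (Fin N) ℝ).toBasis, ← hess_eq_toMatrix₂,
    EuclideanSpace.inner_eq_star_dotProduct, star_trivial]
  exact dotProduct_comm _ _

theorem hess_isHermitian (hφ : ContDiffAt ℝ 2 φ x) : (hess φ x).IsHermitian := by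
  ext i j
  simp [hess_apply, (hφ.isSymmSndFDerivAt (by simp)).eq]

theorem sumMinEig_hess_le {k : ℕ} (hkN : k < N) (hφ : ContDiffAt ℝ 2 φ x)
    {ι : Type*} [Fintype ι] (hι : Fintype.card ι = k) {v : ι → EuclideanSpace ℝ (Fin N)}
    (hv : Orthonormal ℝ v) :
    sumMinEig k (hess φ x) ≤ ∑ j, fderiv ℝ (fderiv ℝ φ) x (v j) (v j) := by
  simpa only [inner_toEuclideanLin_hess] using
    (hess_isHermitian hφ).sumMinEig_le_sum_inner hkN hι hv

theorem IsLocalMax.sumMinEig_hess_nonpos {k : ℕ} (hkN : k < N) (h : IsLocalMax φ x)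
    (hφ : ContDiffAt ℝ 2 φ x) : sumMinEig k (hess φ x) ≤ 0 :=
  calc sumMinEig k (hess φ x)
      ≤ ∑ i : Fin k, fderiv ℝ (fderiv ℝ φ) x (single (Fin.castLE hkN.le i) 1)
          (single (Fin.castLE hkN.le i) 1) :=
        sumMinEig_hess_le hkN hφ (Fintype.card_fin k) (by
          simpa [Function.comp_def] using
            (EuclideanSpace.basisFun _ ℝ).orthonormal.comp _ (Fin.castLE_injective hkN.le))
    _ ≤ 0 := sum_nonpos fun i _ => h.fderiv_fderiv_apply_self_nonpos hφ _

end Hessian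

theorem IsometryEquiv.apply_eq_toRealLinearIsometryEquiv_add {E : Type*}
    [NormedAddCommGroup E] [NormedSpace ℝ E] (g : E ≃ᵢ E) (x : E) :
    g x = g.toRealLinearIsometryEquiv x + g 0 := by
  simp

theorem Fin.card_filter_sub_le_val {n k : ℕ} (hk : k ≤ n) :
    #(univ.filter fun i : Fin n => n - k ≤ (i : ℕ)) = k := by
  have h := card_filter_add_card_filter_not (s := univ) fun i : Fin n => (i : ℕ) < n - k
  simp only [Fin.card_filter_val_lt, not_lt, card_univ, Fintype.card_fin] at h
  omega

section GraphChart

variable {n : ℕ} {Ω U : Set (EuclideanSpace ℝ (Fin (n + 1)))}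
  {g : EuclideanSpace ℝ (Fin (n + 1)) ≃ᵢ EuclideanSpace ℝ (Fin (n + 1))}
  {f : EuclideanSpace ℝ (Fin n) → ℝ} {r : ℝ} {φ : EuclideanSpace ℝ (Fin (n + 1)) → ℝ}

theorem mem_diff_of_le_graph (hΩ : ball (g 0) r ⊆ Ω)
    (hU : ∀ x ∈ ball 0 r,
      (g x ∈ U ↔ f (WithLp.toLp 2 fun i : Fin n => x i.castSucc) < x (Fin.last n)))
    {x : EuclideanSpace ℝ (Fin (n + 1))} (hx : x ∈ ball 0 r)
    (hle : x (Fin.last n) ≤ f (WithLp.toLp 2 fun i : Fin n => x i.castSucc)) : g x ∈ Ω \ U :=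
  ⟨hΩ (by rwa [mem_ball, g.dist_eq]), fun hxU => ((hU x hx).1 hxU).not_ge hle⟩

theorem fderiv_inwardNormal_nonneg (hmax : IsMaxOn φ (Ω \ U) (g 0))
    (hφ : DifferentiableAt ℝ φ (g 0)) (hr : 0 < r) (hΩ : ball (g 0) r ⊆ Ω)
    (hU : ∀ x ∈ ball 0 r,
      (g x ∈ U ↔ f (WithLp.toLp 2 fun i : Fin n => x i.castSucc) < x (Fin.last n)))
    (hf0 : f 0 = 0) :
    0 ≤ fderiv ℝ φ (g 0) (g.toRealLinearIsometryEquiv (single (Fin.last n) 1)) := by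
  set ν := g.toRealLinearIsometryEquiv (single (Fin.last n) 1)
  have hseg : segment ℝ (g 0) (g 0 + (-(r / 2)) • ν) ⊆ Ω \ U := by
    rw [segment_eq_image']
    rintro _ ⟨θ, ⟨hθ0, hθ1⟩, rfl⟩
    have hx : g ((-(θ * (r / 2))) • single (Fin.last n) 1) =
        g 0 + θ • (g 0 + (-(r / 2)) • ν - g 0) := by
      rw [g.apply_eq_toRealLinearIsometryEquiv_add ((-(θ * (r / 2))) • single (Fin.last n) 1),
        map_smul]
      simp only [ν, add_sub_cancel_left, smul_smul, neg_smul, smul_neg]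
      abel
    show g 0 + θ • (g 0 + (-(r / 2)) • ν - g 0) ∈ Ω \ U
    rw [← hx]
    refine mem_diff_of_le_graph hΩ hU ?_ ?_
    · rw [mem_ball, dist_zero_right, norm_smul, PiLp.norm_single, norm_one, mul_one, norm_neg,
        Real.norm_of_nonneg (by positivity)]
      nlinarith
    · have hcs : (WithLp.toLp 2 fun i : Fin n =>
          ((-(θ * (r / 2))) • single (Fin.last n) (1 : ℝ)) i.castSucc) = 0 := by
        ext i
        simp [(Fin.castSucc_lt_last i).ne]
      rw [hcs, hf0]
      simp only [neg_smul, PiLp.neg_apply, PiLp.smul_apply, PiLp.single_eq_same, smul_eq_mul,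
        mul_one, Left.neg_nonpos_iff]
      positivity
  have := hmax.localize.hasFDerivWithinAt_nonpos hφ.hasFDerivAt.hasFDerivWithinAt
    (mem_posTangentConeAt_of_segment_subset hseg)
  rw [map_smul, smul_eq_mul] at this
  nlinarith

theorem fderiv_fderiv_tangent_add_mul_fderiv_normal_nonpos (hmax : IsMaxOn φ (Ω \ U) (g 0))
    (hφ : ContDiffAt ℝ 2 φ (g 0)) (hr : 0 < r) (hΩ : ball (g 0) r ⊆ Ω)
    (hU : ∀ x ∈ ball 0 r,
      (g x ∈ U ↔ f (WithLp.toLp 2 fun i : Fin n => x i.castSucc) < x (Fin.last n)))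
    (hf : ContDiff ℝ 2 f) (hf0 : f 0 = 0) (hDf : fderiv ℝ f 0 = 0) (i : Fin n) :
    fderiv ℝ (fderiv ℝ φ) (g 0) (g.toRealLinearIsometryEquiv (single i.castSucc 1))
        (g.toRealLinearIsometryEquiv (single i.castSucc 1)) +
      fderiv ℝ (fderiv ℝ f) 0 (single i 1) (single i 1) *
        fderiv ℝ φ (g 0) (g.toRealLinearIsometryEquiv (single (Fin.last n) 1)) ≤ 0 := by
  set L := g.toRealLinearIsometryEquiv
  -- the height of the graph above the `i`-th coordinate axis
  set s : ℝ → ℝ := fun t => f (t • single i 1)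
  have hs : ContDiff ℝ 2 s := hf.comp (contDiff_id.smul contDiff_const)
  set X : ℝ → EuclideanSpace ℝ (Fin (n + 1)) :=
    fun t => t • single i.castSucc 1 + s t • single (Fin.last n) 1
  set c : ℝ → EuclideanSpace ℝ (Fin (n + 1)) :=
    fun t => g 0 + t • L (single i.castSucc 1) + s t • L (single (Fin.last n) 1)
  have hcX : ∀ t, c t = g (X t) := fun t => by
    rw [g.apply_eq_toRealLinearIsometryEquiv_add]
    simp only [c, X, map_add, map_smul]
    abel
  have hc : ContDiff ℝ 2 c := by fun_prop
  have hdc : deriv c = fun t => L (single i.castSucc 1) + deriv s t • L (single (Fin.last n) 1) :=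
    funext fun t => ((((hasDerivAt_id t).smul_const _).const_add _).add
      ((hs.differentiable two_ne_zero t).hasDerivAt.smul_const _)).deriv.trans (by simp)
  have hc0 : c 0 = g 0 := by simp [c, s, hf0]
  have hds0 : deriv s 0 = 0 := by
    change deriv (f ∘ fun t : ℝ => t • single i 1) 0 = 0
    rw [fderiv_comp_deriv _ (by simpa using hf.differentiable two_ne_zero 0) (by fun_prop)]
    simp [hDf]
  have hdds0 : deriv (deriv s) 0 = fderiv ℝ (fderiv ℝ f) 0 (single i 1) (single i 1) := by
    change deriv (deriv (f ∘ fun t : ℝ => t • single i 1)) 0 = _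
    have he : deriv (fun t : ℝ => t • single i (1 : ℝ)) = fun _ => single i 1 :=
      funext fun t => by simpa using ((hasDerivAt_id t).smul_const (single i (1 : ℝ))).deriv
    rw [deriv_deriv_comp_of_contDiffAt (by simpa using hf.contDiffAt) (by fun_prop), he]
    simp
  have hmaxc : IsLocalMax (φ ∘ c) 0 := by
    have hX : Tendsto X (𝓝 0) (𝓝 0) :=
      (by fun_prop : Continuous X).tendsto' 0 0 (by simp [X, s, hf0])
    filter_upwards [hX (ball_mem_nhds 0 hr)] with t ht
    have hXi : (WithLp.toLp 2 fun j : Fin n => X t j.castSucc) = t • single i 1 := by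
      ext j
      simp [X, (Fin.castSucc_lt_last j).ne]
    have hXN : X t (Fin.last n) = s t := by
      simp [X, (Fin.castSucc_lt_last i).ne']
    rw [Function.comp_apply, Function.comp_apply, hc0, hcX]
    exact hmax (mem_diff_of_le_graph hΩ hU ht (by rw [hXi, hXN]))
  have := hmaxc.fderiv_fderiv_add_fderiv_nonpos (by rwa [hc0]) hc.contDiffAt
  rw [hdc, deriv_const_add, deriv_smul_const (hs.differentiable_deriv_two 0), hc0] at this
  simpa only [hds0, hdds0, zero_smul, add_zero, map_smul, smul_eq_mul, mul_comm] using this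

theorem sumMinEig_hess_nonpos_of_isMaxOn_graph {k : ℕ} (hk : k ≤ n) {κ : Fin n → ℝ}
    (hmax : IsMaxOn φ (Ω \ U) (g 0)) (hφ : ContDiffAt ℝ 2 φ (g 0)) (hr : 0 < r)
    (hΩ : ball (g 0) r ⊆ Ω)
    (hU : ∀ x ∈ ball 0 r,
      (g x ∈ U ↔ f (WithLp.toLp 2 fun i : Fin n => x i.castSucc) < x (Fin.last n)))
    (hf : ContDiff ℝ 2 f) (hf0 : f 0 = 0) (hDf : fderiv ℝ f 0 = 0)
    (hκ : ∀ i, fderiv ℝ (fderiv ℝ f) 0 (single i 1) (single i 1) = κ i)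
    (hκk : 0 ≤ ∑ i ∈ univ.filter (fun i : Fin n => n - k ≤ (i : ℕ)), κ i) :
    sumMinEig k (hess φ (g 0)) ≤ 0 := by
  set L := g.toRealLinearIsometryEquiv
  set s := univ.filter (fun i : Fin n => n - k ≤ (i : ℕ))
  have hs : Fintype.card s = k := by rw [Fintype.card_coe, Fin.card_filter_sub_le_val hk]
  have hv : Orthonormal ℝ fun i : s => L (single (i : Fin n).castSucc 1) := by
    simpa [Function.comp_def] using ((EuclideanSpace.basisFun _ ℝ).orthonormal.comp _
      ((Fin.castSucc_injective n).comp Subtype.val_injective)).comp_linearIsometryEquiv L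
  have hν := fderiv_inwardNormal_nonneg hmax (hφ.differentiableAt two_ne_zero) hr hΩ hU hf0
  calc sumMinEig k (hess φ (g 0))
      ≤ ∑ i : s, fderiv ℝ (fderiv ℝ φ) (g 0) (L (single (i : Fin n).castSucc 1))
          (L (single (i : Fin n).castSucc 1)) :=
        sumMinEig_hess_le (by omega) hφ hs hv
    _ ≤ ∑ i : s, -(κ i * fderiv ℝ φ (g 0) (L (single (Fin.last n) 1))) :=
        sum_le_sum fun i _ => by
          have := fderiv_fderiv_tangent_add_mul_fderiv_normal_nonpos hmax hφ hr hΩ hU hf hf0 hDf i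
          rw [hκ] at this
          linarith
    _ = -((∑ i ∈ s, κ i) * fderiv ℝ φ (g 0) (L (single (Fin.last n) 1))) := by
        rw [sum_neg_distrib, ← sum_mul, sum_coe_sort s κ]
    _ ≤ 0 := neg_nonpos.mpr (mul_nonneg hκk hν)

end GraphChart

theorem stmt11_general {n : ℕ} (k : ℕ) (hkN : k < n + 1)
    (Ω U : Set (EuclideanSpace ℝ (Fin (n + 1))))
    (hΩ : IsOpen Ω)
    (hbdry : ∀ z ∈ Ω ∩ frontier U, ∃ (r : ℝ), 0 < r ∧
      ∃ (g : EuclideanSpace ℝ (Fin (n + 1)) ≃ᵢ EuclideanSpace ℝ (Fin (n + 1)))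
        (f : EuclideanSpace ℝ (Fin n) → ℝ) (κ : Fin n → ℝ),
      g 0 = z ∧ Metric.ball z r ⊆ Ω ∧ ContDiff ℝ 2 f ∧ f 0 = 0 ∧
      gradient f 0 = 0 ∧ hess f 0 = Matrix.diagonal κ ∧ Monotone κ ∧
      (∀ x : EuclideanSpace ℝ (Fin (n + 1)), x ∈ Metric.ball (0 : EuclideanSpace ℝ (Fin (n + 1))) r →
        (g x ∈ U ↔ f (WithLp.toLp 2 (fun i : Fin n => x i.castSucc)) < x (Fin.last n))) ∧
      0 ≤ ∑ i ∈ Finset.univ.filter (fun i : Fin n => n - k ≤ (i : ℕ)), κ i) :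
    ∀ φ : EuclideanSpace ℝ (Fin (n + 1)) → ℝ, ContDiffOn ℝ 2 φ Ω →
      ∀ xh ∈ Ω \ U, (∀ x ∈ Ω \ U, φ x ≤ 0) → φ xh = 0 →
        sumMinEig k (hess φ xh) ≤ 0 := by
  intro φ hφ xh hxh hle hφ0
  have hφx : ContDiffAt ℝ 2 φ xh := hφ.contDiffAt (hΩ.mem_nhds hxh.1)
  have hmax : IsMaxOn φ (Ω \ U) xh := fun x hx => (hle x hx).trans hφ0.ge
  by_cases hfr : xh ∈ frontier U
  · obtain ⟨r, hr, g, f, κ, rfl, hΩr, hf, hf0, hgrad, hhess, -, hU, hκk⟩ :=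
      hbdry xh ⟨hxh.1, hfr⟩
    have hDf : fderiv ℝ f 0 = 0 := (InnerProductSpace.toDual ℝ _).symm.map_eq_zero_iff.mp hgrad
    refine sumMinEig_hess_nonpos_of_isMaxOn_graph (by omega) hmax hφx hr hΩr hU hf hf0 hDf
      (fun i => ?_) hκk
    rw [← hess_apply, hhess, Matrix.diagonal_apply_eq]
  · have hncl : xh ∉ closure U := fun hcl =>
      hfr ⟨hcl, fun hint => hxh.2 (interior_subset hint)⟩
    refine IsLocalMax.sumMinEig_hess_nonpos hkN (hmax.isLocalMax ?_) hφx
    exact mem_of_superset ((hΩ.sdiff isClosed_closure).mem_nhds ⟨hxh.1, hncl⟩)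
      (Set.sdiff_subset_sdiff_right subset_closure)

/-- If the relative boundary `Ω ∩ ∂U` is a C² hypersurface whose principal
curvatures satisfy `κ_{N−k} + ⋯ + κ_{N−1} ≥ 0` at every point, then the
geometric condition (G_{P_k^-,Ω,U}) holds.  Here `N = n + 1`. -/
theorem stmt11 {n : ℕ} (k : ℕ) (hk1 : 1 ≤ k) (hkN : k < n + 1)
    (Ω U : Set (EuclideanSpace ℝ (Fin (n + 1))))
    (hΩ : IsOpen Ω) (hUopen : IsOpen U) (hUΩ : U ⊆ Ω)
    (hbdry : ∀ z ∈ Ω ∩ frontier U, ∃ (r : ℝ), 0 < r ∧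
      ∃ (g : EuclideanSpace ℝ (Fin (n + 1)) ≃ᵢ EuclideanSpace ℝ (Fin (n + 1)))
        (f : EuclideanSpace ℝ (Fin n) → ℝ) (κ : Fin n → ℝ),
      g 0 = z ∧ Metric.ball z r ⊆ Ω ∧ ContDiff ℝ 2 f ∧ f 0 = 0 ∧
      gradient f 0 = 0 ∧ hess f 0 = Matrix.diagonal κ ∧ Monotone κ ∧
      (∀ x : EuclideanSpace ℝ (Fin (n + 1)), x ∈ Metric.ball (0 : EuclideanSpace ℝ (Fin (n + 1))) r →
        (g x ∈ U ↔ f (WithLp.toLp 2 (fun i : Fin n => x i.castSucc)) < x (Fin.last n))) ∧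
      0 ≤ ∑ i ∈ Finset.univ.filter (fun i : Fin n => n - k ≤ (i : ℕ)), κ i) :
    ∀ φ : EuclideanSpace ℝ (Fin (n + 1)) → ℝ, ContDiffOn ℝ 2 φ Ω →
      ∀ xh ∈ Ω \ U, (∀ x ∈ Ω \ U, φ x ≤ 0) → φ xh = 0 →
        sumMinEig k (hess φ xh) ≤ 0 :=
  stmt11_general k hkN Ω U hΩ hbdry
end

section
/- Let U be an open subset of R^N. The condition (C_{1,U}) holds if and only if every connected component of U is convex. Here (C_{1,U}) states: for every set C of the form z + O(closed segment [−a,a] × closed ball B̄_b^{N−1}) with z ∈ R^N, O an orthogonal matrix, a, b > 0, if the lateral boundary ∂'C = z + O({−a,a} × B̄_b^{N−1}) and the interior of C are both contained in U, then C ⊆ U. -/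
/-!
For `(⇐)`: every point of a cylinder lies on a segment joining its two end disks, and the
interior of the cylinder together with its end disks is connected, hence contained in a single
component of `U`; if that component is convex, it contains the whole cylinder.

For `(⇒)`: it suffices that `[x, m] ⊆ U` and `[m, y] ⊆ U` imply `[x, y] ⊆ U`, because then the
points joined to a fixed `p` by a segment in `U` form a relatively clopen subset of `U`. When
`x ∉ [m, y]`, sweep the thin cylinders whose axis runs from `x` to `m + σ (y - m)`,
`0 ≤ σ ≤ 1`. Their end disks stay close to `[x, m] ∪ [m, y] ⊆ U`. The parameters whose cylinder
lies in `U` form a set that is open to the right (by compactness), and that contains `σ` as soon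
as it contains `[0, σ)`: the interior of the cylinder at `σ` is covered by the earlier cylinders,
so `(C_{1,U})` applies. At `σ = 1` the cylinder contains `[x, y]`.
-/

open Set Metric Filter Topology RealInnerProductSpace

theorem continuous_induction_Icc {α : Type*} [ConditionallyCompleteLinearOrder α]
    [TopologicalSpace α] [OrderTopology α] [DenselyOrdered α] {a b : α} {P : α → Prop}
    (hlim : ∀ σ ∈ Icc a b, (∀ τ ∈ Ico a σ, P τ) → P σ)
    (hstep : ∀ σ ∈ Ico a b, P σ → ∀ᶠ τ in 𝓝[>] σ, P τ) :
    ∀ σ ∈ Icc a b, P σ := by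
  set s := {σ | ∀ τ ∈ Ico a σ, P τ}
  have hs : IsClosed s := by
    have : s = ⋂ τ ∈ {τ | a ≤ τ ∧ ¬P τ}, Iic τ := by
      ext σ
      simp only [s, mem_ofPred_eq, mem_Ico, mem_iInter, mem_Iic, and_imp]
      exact forall_congr' fun τ => forall_congr' fun _ => by rw [← not_lt]; tauto
    rw [this]
    exact isClosed_biInter fun _ _ => isClosed_Iic
  have hsub : Icc a b ⊆ s := by
    refine (hs.inter isClosed_Icc).Icc_subset_of_forall_mem_nhdsGT_of_Icc_subset
      (fun τ hτ => absurd hτ.2 hτ.1.not_gt) fun t ht hts => ?_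
    have hPt : P t := hlim t (Ico_subset_Icc_self ht) (hts (right_mem_Icc.2 ht.1))
    obtain ⟨u, htu, hu⟩ := (mem_nhdsGT_iff_exists_Ioo_subset' ht.2).1 (hstep t ht hPt)
    refine (mem_nhdsGT_iff_exists_Ioo_subset' ht.2).2 ⟨u, htu, fun σ hσ τ hτ => ?_⟩
    rcases lt_trichotomy τ t with hτt | rfl | hτt
    · exact hts (right_mem_Icc.2 ht.1) τ ⟨hτ.1, hτt⟩
    · exact hPt
    · exact hu ⟨hτt, hτ.2.trans hσ.2⟩
  exact fun σ hσ => hlim σ hσ (hsub hσ)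

theorem convex_connectedComponentIn_of_segment_trans {E : Type*} [NormedAddCommGroup E]
    [NormedSpace ℝ E] {U : Set E} (hU : IsOpen U)
    (htrans : ∀ x m y, segment ℝ x m ⊆ U → segment ℝ m y ⊆ U → segment ℝ x y ⊆ U) (x : E) :
    Convex ℝ (connectedComponentIn U x) := by
  have hlocal : ∀ q ∈ U, ∀ᶠ q' in 𝓝 q, segment ℝ q q' ⊆ U ∧ segment ℝ q' q ⊆ U := by
    intro q hq
    obtain ⟨ε, hε, hball⟩ := Metric.isOpen_iff.1 hU q hq
    filter_upwards [ball_mem_nhds q hε] with q' hq'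
    exact ⟨((convex_ball q ε).segment_subset (mem_ball_self hε) hq').trans hball,
      ((convex_ball q ε).segment_subset hq' (mem_ball_self hε)).trans hball⟩
  refine convex_iff_segment_subset.2 fun p hp q hq => ?_
  set A := {q | segment ℝ p q ⊆ U}
  set B := {q | q ∈ U ∧ ¬segment ℝ p q ⊆ U}
  have hA : IsOpen A := isOpen_iff_mem_nhds.2 fun q hq => by
    filter_upwards [hlocal q (hq (right_mem_segment ℝ p q))] with q' hq'
    exact htrans p q q' hq hq'.1
  have hB : IsOpen B := isOpen_iff_mem_nhds.2 fun q hq => by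
    filter_upwards [hU.mem_nhds hq.1, hlocal q hq.1] with q' hq'U hq'
    exact ⟨hq'U, fun hpq' => hq.2 (htrans p q' q hpq' hq'.2)⟩
  have hAB : Disjoint A B := disjoint_left.2 fun q hqA hqB => hqB.2 hqA
  have hcover : connectedComponentIn U x ⊆ A ∪ B := fun q hq => by
    by_cases hpq : segment ℝ p q ⊆ U
    · exact Or.inl hpq
    · exact Or.inr ⟨connectedComponentIn_subset U x hq, hpq⟩
  have hpA : p ∈ A := by
    simpa [A, segment_same] using connectedComponentIn_subset U x hp
  have hpq : segment ℝ p q ⊆ U :=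
    isPreconnected_connectedComponentIn.subset_left_of_subset_union hA hB hAB hcover
      ⟨p, hp, hpA⟩ hq
  rw [connectedComponentIn_eq hp]
  exact (convex_segment p q).isPreconnected.subset_connectedComponentIn
    (left_mem_segment ℝ p q) hpq

lemma isCompact_segment {E : Type*} [NormedAddCommGroup E] [NormedSpace ℝ E] (x y : E) :
    IsCompact (segment ℝ x y) := by
  rw [segment_eq_image']
  exact isCompact_Icc.image (by fun_prop)

lemma add_smul_mem_segment {E : Type*} [AddCommGroup E] [Module ℝ E] {c h : E} {s : ℝ}
    (hs : |s| ≤ 1) : c + s • h ∈ segment ℝ (c - h) (c + h) := by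
  obtain ⟨hs₁, hs₂⟩ := abs_le.1 hs
  refine ⟨(1 - s) / 2, (1 + s) / 2, by linarith, by linarith, by ring, ?_⟩
  module

lemma image_add_linearIsometryEquiv {E : Type*} [NormedAddCommGroup E] [NormedSpace ℝ E]
    {S T : Set E} (z : E) (O : E ≃ₗᵢ[ℝ] E) (hST : ∀ y, z + O y ∈ T ↔ y ∈ S) :
    (fun y => z + O y) '' S = T := by
  have hsurj : Function.Surjective fun y => z + O y := fun q => ⟨O.symm (q - z), by simp⟩
  rw [← hsurj.image_preimage T]
  congr 1
  ext y
  exact (hST y).symm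

section Cylinder

variable {E : Type*} [NormedAddCommGroup E] [InnerProductSpace ℝ E]

/-- The solid cylinder with centre `c`, half-axis `h` and radius `b`. Writing `q - c = s • h + w`
with `w ⟂ h`, the two conditions say `|s| ≤ 1` and `‖w‖ ≤ b` (see `mem_cylinder_add_smul_add`);
they are multiplied through by `‖h‖ ^ 2` so that no division occurs. -/
def cylinder (c h : E) (b : ℝ) : Set E :=
  {q | |⟪q - c, h⟫| ≤ ‖h‖ ^ 2 ∧ ‖‖h‖ ^ 2 • (q - c) - ⟪q - c, h⟫ • h‖ ≤ b * ‖h‖ ^ 2}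

/-- The two end disks of `cylinder c h b`, the set `∂'C` of the paper. -/
def cylinderEnds (c h : E) (b : ℝ) : Set E :=
  {q | |⟪q - c, h⟫| = ‖h‖ ^ 2 ∧ ‖‖h‖ ^ 2 • (q - c) - ⟪q - c, h⟫ • h‖ ≤ b * ‖h‖ ^ 2}

/-- Condition `(C_{1,U})`. -/
def CylinderCondition (U : Set E) : Prop :=
  ∀ c h b, h ≠ 0 → 0 < b → cylinderEnds c h b ⊆ U → interior (cylinder c h b) ⊆ U →
    cylinder c h b ⊆ U

variable {c h w q : E} {b s : ℝ}

lemma exists_eq_add_smul_add (hh : h ≠ 0) (c q : E) :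
    ∃ (s : ℝ) (w : E), ⟪w, h⟫ = 0 ∧ q = c + s • h + w := by
  refine ⟨⟪q - c, h⟫ / ‖h‖ ^ 2, q - c - (⟪q - c, h⟫ / ‖h‖ ^ 2) • h, ?_, by abel⟩
  have : ‖h‖ ≠ 0 := norm_ne_zero_iff.2 hh
  rw [inner_sub_left, real_inner_smul_left, real_inner_self_eq_norm_sq]
  field_simp
  ring

lemma cylinder_coords_add_smul_add (hw : ⟪w, h⟫ = 0) :
    ⟪c + s • h + w - c, h⟫ = s * ‖h‖ ^ 2 ∧
      ‖‖h‖ ^ 2 • (c + s • h + w - c) - ⟪c + s • h + w - c, h⟫ • h‖ = ‖h‖ ^ 2 * ‖w‖ := by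
  have hinner : ⟪c + s • h + w - c, h⟫ = s * ‖h‖ ^ 2 := by
    rw [add_sub_right_comm, add_sub_cancel_left, inner_add_left, real_inner_smul_left,
      real_inner_self_eq_norm_sq, hw, add_zero]
  refine ⟨hinner, ?_⟩
  rw [hinner, show ‖h‖ ^ 2 • (c + s • h + w - c) - (s * ‖h‖ ^ 2) • h = ‖h‖ ^ 2 • w by module,
    norm_smul, norm_pow, norm_norm]

lemma mem_cylinder_add_smul_add (hh : h ≠ 0) (hw : ⟪w, h⟫ = 0) :
    c + s • h + w ∈ cylinder c h b ↔ |s| ≤ 1 ∧ ‖w‖ ≤ b := by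
  have : 0 < ‖h‖ ^ 2 := by positivity
  obtain ⟨hinner, hcross⟩ := cylinder_coords_add_smul_add (c := c) (s := s) hw
  simp only [cylinder, mem_ofPred_eq]
  rw [hcross, hinner, abs_mul, abs_of_pos this, mul_le_iff_le_one_left this, mul_comm b,
    mul_le_mul_iff_right₀ this]

lemma mem_cylinderEnds_add_smul_add (hh : h ≠ 0) (hw : ⟪w, h⟫ = 0) :
    c + s • h + w ∈ cylinderEnds c h b ↔ |s| = 1 ∧ ‖w‖ ≤ b := by
  have : 0 < ‖h‖ ^ 2 := by positivity
  obtain ⟨hinner, hcross⟩ := cylinder_coords_add_smul_add (c := c) (s := s) hw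
  simp only [cylinderEnds, mem_ofPred_eq]
  rw [hcross, hinner, abs_mul, abs_of_pos this, mul_eq_right₀ this.ne', mul_comm b,
    mul_le_mul_iff_right₀ this]

lemma cylinderEnds_subset_cylinder : cylinderEnds c h b ⊆ cylinder c h b :=
  fun _ hq => ⟨hq.1.le, hq.2⟩

lemma segment_subset_cylinder (hh : h ≠ 0) (hb : 0 ≤ b) :
    segment ℝ (c - h) (c + h) ⊆ cylinder c h b := by
  rintro _ ⟨t₁, t₂, ht₁, ht₂, ht, rfl⟩
  have : t₁ • (c - h) + t₂ • (c + h) = c + (t₂ - t₁) • h + 0 := by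
    linear_combination (norm := module) ht • c
  rw [this, mem_cylinder_add_smul_add hh (inner_zero_left h), abs_le]
  exact ⟨⟨by linarith, by linarith⟩, by simpa using hb⟩

lemma exists_mem_segment_dist_le_of_mem_cylinder (hh : h ≠ 0) (hq : q ∈ cylinder c h b) :
    ∃ a ∈ segment ℝ (c - h) (c + h), dist q a ≤ b := by
  obtain ⟨s, w, hw, rfl⟩ := exists_eq_add_smul_add hh c q
  rw [mem_cylinder_add_smul_add hh hw] at hq
  exact ⟨c + s • h, add_smul_mem_segment hq.1, by simpa [dist_eq_norm] using hq.2⟩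

lemma cylinderEnds_subset (hh : h ≠ 0) :
    cylinderEnds c h b ⊆ closedBall (c - h) b ∪ closedBall (c + h) b := by
  intro q hq
  obtain ⟨s, w, hw, rfl⟩ := exists_eq_add_smul_add hh c q
  rw [mem_cylinderEnds_add_smul_add hh hw] at hq
  rcases (abs_eq zero_le_one).1 hq.1 with rfl | rfl
  · right
    simpa [dist_eq_norm] using hq.2
  · left
    simpa [dist_eq_norm, ← sub_eq_add_neg] using hq.2

lemma cylinder_subset_closedBall (hh : h ≠ 0) : cylinder c h b ⊆ closedBall c (‖h‖ + b) := by
  intro q hq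
  obtain ⟨s, w, hw, rfl⟩ := exists_eq_add_smul_add hh c q
  rw [mem_cylinder_add_smul_add hh hw] at hq
  rw [mem_closedBall, dist_eq_norm, add_assoc, add_sub_cancel_left]
  calc ‖s • h + w‖ ≤ |s| * ‖h‖ + ‖w‖ := by
        simpa [norm_smul] using norm_add_le (s • h) w
    _ ≤ 1 * ‖h‖ + b := by gcongr; exacts [hq.1, hq.2]
    _ = ‖h‖ + b := by rw [one_mul]

lemma convex_cylinder (c h : E) (b : ℝ) : Convex ℝ (cylinder c h b) := by
  intro q₁ hq₁ q₂ hq₂ α β hα hβ hαβ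
  have hv : α • q₁ + β • q₂ - c = α • (q₁ - c) + β • (q₂ - c) := by
    linear_combination (norm := module) hαβ • c
  have hinner : ⟪α • q₁ + β • q₂ - c, h⟫ = α * ⟪q₁ - c, h⟫ + β * ⟪q₂ - c, h⟫ := by
    rw [hv, inner_add_left, real_inner_smul_left, real_inner_smul_left]
  have hcross : ‖h‖ ^ 2 • (α • q₁ + β • q₂ - c) - ⟪α • q₁ + β • q₂ - c, h⟫ • h =
      α • (‖h‖ ^ 2 • (q₁ - c) - ⟪q₁ - c, h⟫ • h) +
        β • (‖h‖ ^ 2 • (q₂ - c) - ⟪q₂ - c, h⟫ • h) := by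
    rw [hinner, hv]
    module
  constructor
  · rw [hinner]
    refine (abs_add_le _ _).trans ?_
    rw [abs_mul, abs_mul, abs_of_nonneg hα, abs_of_nonneg hβ]
    calc α * _ + β * _ ≤ α * ‖h‖ ^ 2 + β * ‖h‖ ^ 2 := by gcongr; exacts [hq₁.1, hq₂.1]
      _ = ‖h‖ ^ 2 := by rw [← add_mul, hαβ, one_mul]
  · rw [hcross]
    refine (norm_add_le _ _).trans ?_
    rw [norm_smul, norm_smul, Real.norm_of_nonneg hα, Real.norm_of_nonneg hβ]
    calc α * _ + β * _ ≤ α * (b * ‖h‖ ^ 2) + β * (b * ‖h‖ ^ 2) := by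
          gcongr; exacts [hq₁.2, hq₂.2]
      _ = b * ‖h‖ ^ 2 := by rw [← add_mul, hαβ, one_mul]

lemma isClosed_setOf_mem_cylinder (b : ℝ) :
    IsClosed {p : (E × E) × E | p.2 ∈ cylinder p.1.1 p.1.2 b} := by
  simp only [cylinder, ofPred_and]
  exact (isClosed_le (by fun_prop) (by fun_prop)).inter (isClosed_le (by fun_prop) (by fun_prop))

lemma interior_cylinder (hh : h ≠ 0) (hb : 0 < b) :
    interior (cylinder c h b) =
      {q | |⟪q - c, h⟫| < ‖h‖ ^ 2 ∧ ‖‖h‖ ^ 2 • (q - c) - ⟪q - c, h⟫ • h‖ < b * ‖h‖ ^ 2} := by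
  refine Subset.antisymm (fun q hq => ?_) (interior_maximal (fun q hq => ⟨hq.1.le, hq.2.le⟩) ?_)
  · -- dilating `q` about the centre by some factor `t > 1` keeps it in the cylinder
    have hdil : Tendsto (fun t : ℝ => c + t • (q - c)) (𝓝 1) (𝓝 q) := by
      have : Continuous fun t : ℝ => c + t • (q - c) := by fun_prop
      simpa using this.tendsto 1
    obtain ⟨t, ⟨htK₁, htK₂⟩, ht⟩ := ((hdil.eventually (mem_interior_iff_mem_nhds.1 hq)).filter_mono
      nhdsWithin_le_nhds |>.and (self_mem_nhdsWithin (s := Ioi (1 : ℝ)))).exists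
    have key : ∀ x A : ℝ, 0 ≤ x → 0 < A → t * x ≤ A → x < A := fun x A hx hA hxA => by
      nlinarith
    rw [add_sub_cancel_left, real_inner_smul_left, abs_mul,
      abs_of_pos (zero_lt_one.trans ht)] at htK₁
    rw [add_sub_cancel_left, real_inner_smul_left, mul_smul, smul_comm, ← smul_sub, norm_smul,
      Real.norm_of_nonneg (zero_le_one.trans ht.le)] at htK₂
    exact ⟨key _ _ (abs_nonneg _) (by positivity) htK₁,
      key _ _ (norm_nonneg _) (by positivity) htK₂⟩
  · rw [ofPred_and]
    exact (isOpen_lt (by fun_prop) (by fun_prop)).inter (isOpen_lt (by fun_prop) (by fun_prop))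

lemma center_mem_interior_cylinder (hh : h ≠ 0) (hb : 0 < b) : c ∈ interior (cylinder c h b) := by
  rw [interior_cylinder hh hb]
  simp [hh, hb]

lemma eventually_mem_cylinder_of_mem_interior (hh : h ≠ 0) (hb : 0 < b)
    (hq : q ∈ interior (cylinder c h b)) : ∀ᶠ p : E × E in 𝓝 (c, h), q ∈ cylinder p.1 p.2 b := by
  rw [interior_cylinder hh hb] at hq
  filter_upwards [ContinuousAt.eventually_lt (f := fun p : E × E => |⟪q - p.1, p.2⟫|)
      (g := fun p => ‖p.2‖ ^ 2) (by fun_prop) (by fun_prop) hq.1,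
    ContinuousAt.eventually_lt
      (f := fun p : E × E => ‖‖p.2‖ ^ 2 • (q - p.1) - ⟪q - p.1, p.2⟫ • p.2‖)
      (g := fun p => b * ‖p.2‖ ^ 2) (by fun_prop) (by fun_prop) hq.2] with p hp₁ hp₂
  exact ⟨hp₁.le, hp₂.le⟩

lemma eventually_cylinder_subset [ProperSpace E] {U : Set E} (hU : IsOpen U) (hh : h ≠ 0)
    (hK : cylinder c h b ⊆ U) : ∀ᶠ p : E × E in 𝓝 (c, h), cylinder p.1 p.2 b ⊆ U := by
  set B := closedBall c (‖h‖ + 1 + b)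
  have hB : ∀ᶠ p : E × E in 𝓝 (c, h), cylinder p.1 p.2 b ⊆ B := by
    have hlt : ∀ᶠ p : E × E in 𝓝 (c, h), ‖p.1 - c‖ + ‖p.2‖ < ‖h‖ + 1 :=
      ContinuousAt.eventually_lt (by fun_prop) (by fun_prop) (by simp)
    have hne : ∀ᶠ p : E × E in 𝓝 (c, h), p.2 ≠ 0 :=
      continuous_snd.continuousAt.eventually_ne hh
    filter_upwards [hlt, hne] with p hp hp₀
    refine (cylinder_subset_closedBall hp₀).trans (closedBall_subset_closedBall' ?_)
    rw [dist_eq_norm]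
    linarith
  -- tube lemma over the compact ball `B`
  set G := {z : (E × E) × E | z.2 ∈ cylinder z.1.1 z.1.2 b}
  have hopen : IsOpen (Gᶜ ∪ Prod.snd ⁻¹' U) :=
    (isClosed_setOf_mem_cylinder b).isOpen_compl.union (hU.preimage continuous_snd)
  have hU' : ∀ᶠ p : E × E in 𝓝 (c, h), ∀ q ∈ B, (p, q) ∈ Gᶜ ∪ Prod.snd ⁻¹' U := by
    refine (isCompact_closedBall c _).eventually_forall_of_forall_eventually fun q _ => ?_
    refine hopen.mem_nhds ?_
    by_cases hq : q ∈ cylinder c h b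
    · exact Or.inr (hK hq)
    · exact Or.inl hq
  filter_upwards [hB, hU'] with p hpB hpU q hq
  exact (hpU q (hpB hq)).resolve_left (not_not.2 hq)

variable {U : Set E}

theorem CylinderCondition.of_convex_connectedComponentIn
    (hconv : ∀ x ∈ U, Convex ℝ (connectedComponentIn U x)) : CylinderCondition U := by
  intro c h b hh hb hends hint q hq
  obtain ⟨s, w, hw, rfl⟩ := exists_eq_add_smul_add hh c q
  rw [mem_cylinder_add_smul_add hh hw] at hq
  -- the point lies on the segment joining two points of the end disks ...
  have hseg : c + s • h + w ∈ segment ℝ (c + w - h) (c + w + h) := by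
    rw [add_right_comm c (s • h) w]
    exact add_smul_mem_segment hq.1
  have hend : ∀ t : ℝ, |t| = 1 → c + w + t • h ∈ cylinderEnds c h b := fun t ht => by
    rw [add_right_comm, mem_cylinderEnds_add_smul_add hh hw]
    exact ⟨ht, hq.2⟩
  have hneg : c + w - h ∈ cylinderEnds c h b := by
    simpa [sub_eq_add_neg] using hend (-1) (by simp)
  have hpos : c + w + h ∈ cylinderEnds c h b := by simpa using hend 1 (by simp)
  -- ... which are connected to each other through the interior of the cylinder
  have hK := convex_cylinder c h b
  have hclosure : closure (interior (cylinder c h b)) = closure (cylinder c h b) :=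
    hK.closure_interior_eq_closure_of_nonempty_interior ⟨c, center_mem_interior_cylinder hh hb⟩
  have hconn : IsPreconnected (interior (cylinder c h b) ∪ cylinderEnds c h b) :=
    hK.interior.isPreconnected.subset_closure subset_union_left <| union_subset subset_closure <|
      hclosure ▸ cylinderEnds_subset_cylinder.trans subset_closure
  have hW := hconn.subset_connectedComponentIn (Or.inr hpos) (union_subset hint hends)
  exact connectedComponentIn_subset U _ <|
    (hconv _ (hends hpos)).segment_subset (hW (Or.inr hneg)) (hW (Or.inr hpos)) hseg

theorem CylinderCondition.cylinder_subset_of_eventually_lt (hC : CylinderCondition U)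
    {f : ℝ → E × E} {σ : ℝ} (hf : ContinuousAt f σ) (hh : (f σ).2 ≠ 0) (hb : 0 < b)
    (hends : cylinderEnds (f σ).1 (f σ).2 b ⊆ U)
    (hK : ∀ᶠ τ in 𝓝[<] σ, cylinder (f τ).1 (f τ).2 b ⊆ U) :
    cylinder (f σ).1 (f σ).2 b ⊆ U := by
  refine hC _ _ _ hh hb hends fun q hq => ?_
  -- `q` lies in the cylinders with parameter slightly below `σ`
  obtain ⟨τ, hqτ, hτ⟩ := ((hf.eventually (eventually_mem_cylinder_of_mem_interior hh hb hq))
    |>.filter_mono nhdsWithin_le_nhds |>.and hK).exists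
  exact hτ hqτ

theorem CylinderCondition.segment_subset_of_notMem_segment [ProperSpace E] (hU : IsOpen U)
    (hC : CylinderCondition U) {x m y : E} (hxm : segment ℝ x m ⊆ U) (hmy : segment ℝ m y ⊆ U)
    (hx : x ∉ segment ℝ m y) : segment ℝ x y ⊆ U := by
  obtain ⟨δ, hδ, hδU⟩ := ((isCompact_segment x m).union
    (isCompact_segment m y)).exists_thickening_subset_open hU (union_subset hxm hmy)
  have hb : 0 < δ / 2 := half_pos hδ
  have hnear : ∀ q a, a ∈ segment ℝ x m ∪ segment ℝ m y → dist q a ≤ δ / 2 → q ∈ U :=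
    fun q a ha hqa => hδU (mem_thickening_iff.2 ⟨a, ha, by linarith⟩)
  have hp : ∀ σ ∈ Icc (0 : ℝ) 1, m + σ • (y - m) ∈ segment ℝ m y := fun σ hσ => by
    rw [segment_eq_image']
    exact mem_image_of_mem _ hσ
  -- `K σ` is the cylinder of radius `δ / 2` whose axis runs from `x` to `m + σ • (y - m)`
  set h : ℝ → E := fun σ => (2⁻¹ : ℝ) • (m + σ • (y - m) - x)
  set K : ℝ → Set E := fun σ => cylinder (x + h σ) (h σ) (δ / 2)
  have hbot : ∀ σ, x + h σ - h σ = x := fun σ => add_sub_cancel_right x (h σ)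
  have htop : ∀ σ, x + h σ + h σ = m + σ • (y - m) := fun σ => by simp only [h]; module
  have hh : ∀ σ ∈ Icc (0 : ℝ) 1, h σ ≠ 0 := fun σ hσ h0 => hx <| by
    have := hp σ hσ
    rwa [← htop σ, h0, add_zero, add_zero] at this
  have hcont : Continuous fun σ => (x + h σ, h σ) := by fun_prop
  have hends : ∀ σ ∈ Icc (0 : ℝ) 1, cylinderEnds (x + h σ) (h σ) (δ / 2) ⊆ U := by
    intro σ hσ q hq
    rcases cylinderEnds_subset (hh σ hσ) hq with hq | hq
    · rw [hbot] at hq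
      exact hnear q x (Or.inl (left_mem_segment ℝ x m)) hq
    · rw [htop] at hq
      exact hnear q _ (Or.inr (hp σ hσ)) hq
  have hlim : ∀ σ ∈ Icc (0 : ℝ) 1, (∀ τ ∈ Ico 0 σ, K τ ⊆ U) → K σ ⊆ U := by
    intro σ hσ hK
    rcases hσ.1.eq_or_lt with rfl | hσ₀
    · intro q hq
      obtain ⟨a, ha, hqa⟩ := exists_mem_segment_dist_le_of_mem_cylinder (hh 0 hσ) hq
      rw [hbot, htop, zero_smul, add_zero] at ha
      exact hnear q a (Or.inl ha) hqa
    exact hC.cylinder_subset_of_eventually_lt hcont.continuousAt (hh σ hσ) hb (hends σ hσ)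
      (eventually_of_mem (Ioo_mem_nhdsLT hσ₀) fun τ hτ => hK τ ⟨hτ.1.le, hτ.2⟩)
  have hstep : ∀ σ ∈ Ico (0 : ℝ) 1, K σ ⊆ U → ∀ᶠ τ in 𝓝[>] σ, K τ ⊆ U := fun σ hσ hK =>
    ((hcont.tendsto σ).eventually (eventually_cylinder_subset hU (hh σ (Ico_subset_Icc_self hσ))
      hK)).filter_mono nhdsWithin_le_nhds
  have hK₁ := continuous_induction_Icc hlim hstep 1 (right_mem_Icc.2 zero_le_one)
  have hxy := segment_subset_cylinder (c := x + h 1) (hh 1 (right_mem_Icc.2 zero_le_one)) hb.le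
  rw [hbot, htop, one_smul, add_sub_cancel] at hxy
  exact hxy.trans hK₁

theorem CylinderCondition.segment_subset [ProperSpace E] (hU : IsOpen U)
    (hC : CylinderCondition U) {x m y : E} (hxm : segment ℝ x m ⊆ U) (hmy : segment ℝ m y ⊆ U) :
    segment ℝ x y ⊆ U := by
  by_cases hx : x ∈ segment ℝ m y
  · exact ((convex_segment m y).segment_subset hx (right_mem_segment ℝ m y)).trans hmy
  · exact hC.segment_subset_of_notMem_segment hU hxm hmy hx

theorem cylinderCondition_iff_convex_connectedComponentIn [ProperSpace E] (hU : IsOpen U) :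
    CylinderCondition U ↔ ∀ x ∈ U, Convex ℝ (connectedComponentIn U x) :=
  ⟨fun hC x _ => convex_connectedComponentIn_of_segment_trans hU
    (fun _ _ _ => hC.segment_subset hU) x, CylinderCondition.of_convex_connectedComponentIn⟩

end Cylinder

section Euclidean

variable {n : ℕ}

local notation "𝔼" => EuclideanSpace ℝ (Fin (n + 1))

local notation "e₀" => EuclideanSpace.single (0 : Fin (n + 1)) (1 : ℝ)

lemma norm_sub_single_zero_sq (y : 𝔼) :
    ‖y - EuclideanSpace.single 0 (y 0)‖ ^ 2 =
      ∑ i ∈ Finset.univ.filter (fun i : Fin (n + 1) => i ≠ 0), y i ^ 2 := by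
  rw [EuclideanSpace.norm_sq_eq, Finset.sum_filter]
  refine Finset.sum_congr rfl fun i _ => ?_
  by_cases hi : i = 0 <;> simp [hi]

lemma rigid_cylinder_coords (z : 𝔼) (O : 𝔼 ≃ₗᵢ[ℝ] 𝔼) {a : ℝ} (ha : 0 < a) (y : 𝔼) :
    ‖a • O e₀‖ = a ∧ ⟪z + O y - z, a • O e₀⟫ = a * y 0 ∧
      ‖‖a • O e₀‖ ^ 2 • (z + O y - z) - ⟪z + O y - z, a • O e₀⟫ • a • O e₀‖ =
        a ^ 2 * ‖y - EuclideanSpace.single 0 (y 0)‖ := by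
  have hnorm : ‖a • O e₀‖ = a := by simp [norm_smul, ha.le]
  have hinner : ⟪z + O y - z, a • O e₀⟫ = a * y 0 := by
    simp [real_inner_smul_right, EuclideanSpace.inner_single_right]
  have hsingle : EuclideanSpace.single 0 (y 0) = y 0 • e₀ := by
    ext i
    simp
  refine ⟨hnorm, hinner, ?_⟩
  rw [hnorm, hinner, add_sub_cancel_left, hsingle, ← O.norm_map (y - _), map_sub, map_smul,
    show a ^ 2 • O y - (a * y 0) • a • O e₀ = a ^ 2 • (O y - y 0 • O e₀) by module,
    norm_smul, norm_pow, Real.norm_of_nonneg ha.le]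

lemma image_rigid_cylinder (z : 𝔼) (O : 𝔼 ≃ₗᵢ[ℝ] 𝔼) {a b : ℝ} (ha : 0 < a) (hb : 0 < b) :
    (fun y => z + O y) '' {y : 𝔼 |
        |y 0| ≤ a ∧ ∑ i ∈ Finset.univ.filter (fun i : Fin (n + 1) => i ≠ 0), (y i) ^ 2 ≤ b ^ 2} =
      cylinder z (a • O e₀) b := by
  refine image_add_linearIsometryEquiv z O fun y => ?_
  obtain ⟨hnorm, hinner, hcross⟩ := rigid_cylinder_coords z O ha y
  simp only [cylinder, mem_ofPred_eq]
  rw [hcross, hinner, hnorm, ← norm_sub_single_zero_sq, abs_mul, abs_of_pos ha, sq a,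
    mul_le_mul_iff_right₀ ha, mul_comm b, ← sq, mul_le_mul_iff_right₀ (by positivity),
    sq_le_sq₀ (norm_nonneg _) hb.le]

lemma image_rigid_cylinderEnds (z : 𝔼) (O : 𝔼 ≃ₗᵢ[ℝ] 𝔼) {a b : ℝ} (ha : 0 < a) (hb : 0 < b) :
    (fun y => z + O y) '' {y : 𝔼 |
        |y 0| = a ∧ ∑ i ∈ Finset.univ.filter (fun i : Fin (n + 1) => i ≠ 0), (y i) ^ 2 ≤ b ^ 2} =
      cylinderEnds z (a • O e₀) b := by
  refine image_add_linearIsometryEquiv z O fun y => ?_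
  obtain ⟨hnorm, hinner, hcross⟩ := rigid_cylinder_coords z O ha y
  simp only [cylinderEnds, mem_ofPred_eq]
  rw [hcross, hinner, hnorm, ← norm_sub_single_zero_sq, abs_mul, abs_of_pos ha, sq a,
    mul_right_inj' ha.ne', mul_comm b, ← sq, mul_le_mul_iff_right₀ (by positivity),
    sq_le_sq₀ (norm_nonneg _) hb.le]

lemma cylinderCondition_iff_forall_rigid (U : Set 𝔼) :
    CylinderCondition U ↔
      ∀ (z : 𝔼) (O : 𝔼 ≃ₗᵢ[ℝ] 𝔼) (a b : ℝ), 0 < a → 0 < b →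
        ((fun y => z + O y) '' {y : 𝔼 | |y 0| = a ∧
          ∑ i ∈ Finset.univ.filter (fun i : Fin (n + 1) => i ≠ 0), (y i) ^ 2 ≤ b ^ 2} ⊆ U) →
        (interior ((fun y => z + O y) '' {y : 𝔼 | |y 0| ≤ a ∧
          ∑ i ∈ Finset.univ.filter (fun i : Fin (n + 1) => i ≠ 0), (y i) ^ 2 ≤ b ^ 2}) ⊆ U) →
        (fun y => z + O y) '' {y : 𝔼 | |y 0| ≤ a ∧
          ∑ i ∈ Finset.univ.filter (fun i : Fin (n + 1) => i ≠ 0), (y i) ^ 2 ≤ b ^ 2} ⊆ U := by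
  constructor
  · intro hC z O a b ha hb
    rw [image_rigid_cylinder z O ha hb, image_rigid_cylinderEnds z O ha hb]
    exact hC _ _ _ (by simp [ha.ne']) hb
  · intro hC c h b hh hb
    have ha : 0 < ‖h‖ := norm_pos_iff.2 hh
    obtain ⟨O, hO⟩ : ∃ O : 𝔼 ≃ₗᵢ[ℝ] 𝔼, O e₀ = ‖h‖⁻¹ • h :=
      ⟨_, Submodule.reflection_sub (by simp [norm_smul, hh])⟩
    have := hC c O ‖h‖ b ha hb
    rwa [image_rigid_cylinder c O ha hb, image_rigid_cylinderEnds c O ha hb, hO,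
      smul_inv_smul₀ ha.ne'] at this

end Euclidean

/-- Condition (C_{1,U}) holds if and only if every connected component of the
open set `U ⊆ ℝ^N` is convex.  A cylinder `C` is a rigid image of
`[−a,a] × B̄_b^{N−1}`, with lateral boundary the image of
`{−a,a} × B̄_b^{N−1}`.  Here `N = n + 1`. -/
theorem stmt15 {n : ℕ} (U : Set (EuclideanSpace ℝ (Fin (n + 1)))) (hU : IsOpen U) :
    (∀ (z : EuclideanSpace ℝ (Fin (n + 1)))
        (O : EuclideanSpace ℝ (Fin (n + 1)) ≃ₗᵢ[ℝ] EuclideanSpace ℝ (Fin (n + 1)))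
        (a b : ℝ), 0 < a → 0 < b →
      ((fun y => z + O y) '' {y : EuclideanSpace ℝ (Fin (n + 1)) |
          |y 0| = a ∧ ∑ i ∈ Finset.univ.filter (fun i : Fin (n + 1) => i ≠ 0), (y i) ^ 2 ≤ b ^ 2} ⊆ U) →
      (interior ((fun y => z + O y) '' {y : EuclideanSpace ℝ (Fin (n + 1)) |
          |y 0| ≤ a ∧ ∑ i ∈ Finset.univ.filter (fun i : Fin (n + 1) => i ≠ 0), (y i) ^ 2 ≤ b ^ 2}) ⊆ U) →
      (fun y => z + O y) '' {y : EuclideanSpace ℝ (Fin (n + 1)) |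
          |y 0| ≤ a ∧ ∑ i ∈ Finset.univ.filter (fun i : Fin (n + 1) => i ≠ 0), (y i) ^ 2 ≤ b ^ 2} ⊆ U)
    ↔ ∀ x ∈ U, Convex ℝ (connectedComponentIn U x) :=
  (cylinderCondition_iff_forall_rigid U).symm.trans
    (cylinderCondition_iff_convex_connectedComponentIn hU)
end
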